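/- arXiv:1702.04477 — 2 statements merged into one kernel-verified Lean document; each statement's English description precedes it below -/
import Mathlib

section
/- Let C be a 2×2 real positive definite matrix with off-diagonal entry c₁₂ ≠ 0. Then the set of pairs (τ, β) with τ = (τ₁, τ₂) ∈ ℝ², β ∈ ℝ² (viewed as a 1×2 matrix), τ₁, τ₂ > 0, satisfying diag(τ₁², τ₂²) + βᵀβ = C, is infinite. -/
open Matrix

/-- Let `C` be a `2 × 2` positive definite matrix with `c₁₂ ≠ 0`. The set of pairs
`(τ, β)` with `τ₁, τ₂ > 0` and `β` a `1 × 2` matrix satisfying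
`diag(τ₁², τ₂²) + βᵀβ = C` is infinite. -/
theorem solution_set_infinite (c11 c12 c22 : ℝ)
    (h11 : 0 < c11) (h22 : 0 < c22) (hdet : 0 < c11 * c22 - c12 ^ 2) (hc12 : c12 ≠ 0) :
    {x : (ℝ × ℝ) × Matrix (Fin 1) (Fin 2) ℝ |
      0 < x.1.1 ∧ 0 < x.1.2 ∧
      Matrix.diagonal ![x.1.1 ^ 2, x.1.2 ^ 2] + x.2ᵀ * x.2 =
        !![c11, c12; c12, c22]}.Infinite := by
  set a : ℝ := Real.sqrt (c12 ^ 2 / c22) with ha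
  set b : ℝ := Real.sqrt c11 with hb
  have hab : a < b := by
    apply Real.sqrt_lt_sqrt (by positivity)
    rw [div_lt_iff₀ h22]
    nlinarith
  set f : ℝ → (ℝ × ℝ) × Matrix (Fin 1) (Fin 2) ℝ := fun t =>
    ((Real.sqrt (c11 - t ^ 2), Real.sqrt (c22 - (c12 / t) ^ 2)), !![t, c12 / t]) with hf
  have hmaps : ∀ t ∈ Set.Ioo a b, f t ∈ {x : (ℝ × ℝ) × Matrix (Fin 1) (Fin 2) ℝ |
      0 < x.1.1 ∧ 0 < x.1.2 ∧
      Matrix.diagonal ![x.1.1 ^ 2, x.1.2 ^ 2] + x.2ᵀ * x.2 =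
        !![c11, c12; c12, c22]} := by
    intro t ht
    obtain ⟨ht1, ht2⟩ := ht
    have ha0 : 0 < a := Real.sqrt_pos.mpr (by positivity)
    have ht0 : 0 < t := ha0.trans ht1
    have htc11 : t ^ 2 < c11 := by
      have := Real.sq_sqrt h11.le
      nlinarith [Real.sqrt_nonneg c11]
    have htc22 : (c12 / t) ^ 2 < c22 := by
      have h1 : c12 ^ 2 / c22 < t ^ 2 := by
        have := Real.sq_sqrt (show (0:ℝ) ≤ c12 ^ 2 / c22 by positivity)
        nlinarith [Real.sqrt_nonneg (c12 ^ 2 / c22)]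
      rw [div_pow]
      rw [div_lt_iff₀ h22] at h1
      rw [div_lt_iff₀ (by positivity)]
      nlinarith
    have hs1 : 0 < Real.sqrt (c11 - t ^ 2) := Real.sqrt_pos.mpr (by linarith)
    have hs2 : 0 < Real.sqrt (c22 - (c12 / t) ^ 2) := Real.sqrt_pos.mpr (by linarith)
    refine ⟨hs1, hs2, ?_⟩
    have e1 : Real.sqrt (c11 - t ^ 2) ^ 2 = c11 - t ^ 2 :=
      Real.sq_sqrt (by linarith)
    have e2 : Real.sqrt (c22 - (c12 / t) ^ 2) ^ 2 = c22 - (c12 / t) ^ 2 :=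
      Real.sq_sqrt (by linarith)
    ext i j
    fin_cases i <;> fin_cases j <;>
      simp [hf, Matrix.mul_apply, Fin.sum_univ_two, Matrix.diagonal, e1, e2] <;>
      (try field_simp) <;> (try ring)
  have hinj : Set.InjOn f (Set.Ioo a b) := by
    intro s hs t ht hst
    have : (f s).2 0 0 = (f t).2 0 0 := by rw [hst]
    simpa [hf] using this
  exact ((Set.Ioo_infinite hab).image hinj).mono (Set.image_subset_iff.mpr hmaps)
end

section
/- For all p ≥ 2 and q ≥ 1, there exists a p×p real positive definite matrix C such that the set of pairs (τ, β), with τ ∈ ℝᵖ having positive entries and β a q×p real matrix, satisfying diag(τ₁²,…,τ_p²) + βᵀβ = C, is infinite. -/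
open Matrix

/-!
Already for the diagonal matrix `C = I` the decomposition is far from unique: for every
`0 < t < 1`, putting the single entry `t` into `β` and lowering the corresponding entry of
`τ` to `√(1 - t²)` gives a solution, and distinct `t` give distinct solutions.
-/

namespace Matrix

variable {m n : Type*} [DecidableEq m] [DecidableEq n]

theorem transpose_single_mul_single [Fintype m] (i : m) (j : n) (t : ℝ) :
    (single i j t)ᵀ * single i j t = diagonal (Pi.single j (t ^ 2)) := by
  rw [transpose_single, single_mul_single_same, diagonal_single, sq]

theorem setOf_diagonal_sq_add_transpose_mul_self_eq_diagonal_infinite [Fintype m]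
    [Nonempty m] [Nonempty n] {d : n → ℝ} (hd : ∀ k, 0 < d k) :
    {x : (n → ℝ) × Matrix m n ℝ |
      (∀ k, 0 < x.1 k) ∧ diagonal (fun k => x.1 k ^ 2) + x.2ᵀ * x.2 = diagonal d}.Infinite := by
  obtain ⟨i⟩ := ‹Nonempty m›
  obtain ⟨j⟩ := ‹Nonempty n›
  let solution (t : ℝ) : (n → ℝ) × Matrix m n ℝ :=
    (fun k => √(d k - (Pi.single j (t ^ 2) : n → ℝ) k), single i j t)
  refine Set.infinite_of_injOn_mapsTo (f := solution) (s := Set.Ioo 0 √(d j)) ?_ ?_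
    (Set.Ioo_infinite (Real.sqrt_pos.2 (hd j)))
  · intro s _ t _ hst
    simpa [solution] using congrArg (fun x => x.2 i j) hst
  · rintro t ⟨ht₀, htd⟩
    have hgap : ∀ k, 0 < d k - (Pi.single j (t ^ 2) : n → ℝ) k := by
      intro k
      rcases eq_or_ne k j with rfl | hk
      · rw [Pi.single_eq_same, sub_pos]
        exact (Real.lt_sqrt ht₀.le).1 htd
      · simpa [Pi.single_eq_of_ne hk] using hd k
    refine ⟨fun k => Real.sqrt_pos.2 (hgap k), ?_⟩
    simp only [solution, transpose_single_mul_single, diagonal_add,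
      Real.sq_sqrt (hgap _).le, sub_add_cancel]

end Matrix

/-- For all `p ≥ 2` and `q ≥ 1`, there exists a `p × p` positive definite matrix `C`
such that the set of pairs `(τ, β)` with `τ ∈ ℝᵖ` having positive entries and `β`
a `q × p` matrix, satisfying `diag(τ₁²,…,τ_p²) + βᵀβ = C`, is infinite. -/
theorem exists_posdef_infinite_solutions (p q : ℕ) (hp : 2 ≤ p) (hq : 1 ≤ q) :
    ∃ C : Matrix (Fin p) (Fin p) ℝ, C.PosDef ∧
      {x : (Fin p → ℝ) × Matrix (Fin q) (Fin p) ℝ |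
        (∀ k, 0 < x.1 k) ∧
        Matrix.diagonal (fun k => x.1 k ^ 2) + x.2ᵀ * x.2 = C}.Infinite := by
  have : Nonempty (Fin p) := Fin.pos_iff_nonempty.1 (by omega)
  have : Nonempty (Fin q) := Fin.pos_iff_nonempty.1 hq
  exact ⟨diagonal fun _ => 1, posDef_diagonal_iff.2 fun _ => one_pos,
    setOf_diagonal_sq_add_transpose_mul_self_eq_diagonal_infinite fun _ => one_pos⟩
end
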